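/- Any entire solution of the decoupled family of planar Lotka-Volterra predator-prey systems H_i' = H_i(P_i* − P_i), P_i' = e_i n_i P_i(H_i − H_i*) (i = 1,...,n) with all components positive conserves the quantity Π_{i=1}^n P_i(t)^{a_i/(e_i n_i)} provided it also satisfies the constraint Σ_i a_i H_i(t) = Σ_i a_i H_i* for all t. Moreover, each pair (H_i, P_i) lies on a closed level curve of the conserved quantity e_i n_i(H_i − H_i* log H_i) + (P_i − P_i* log P_i), hence is either periodic or the constant equilibrium (H_i*, P_i*). -/

import Mathlib

/-!
In the coordinates `x = log (H_i / H_i*)`, `y = log (P_i / P_i*)`, `z = x + y i`, each pair solves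
`x' = P_i* (1 - e^y)`, `y' = e_i n_i H_i* (e^x - 1)`, which conserves the energy
`e_i n_i H_i* φ x + P_i* φ y` with `φ s = e^s - 1 - s`. Off the equilibrium the orbit stays on a
compact level curve avoiding the origin, around which it winds with angular speed bounded below;
the angle is the imaginary part of `ψ = ∫ z'/z`, for which `z = z 0 · exp ψ`. After one full
turn the orbit is back on its initial ray, along which the energy is strictly increasing, so it
is back at its starting point, and uniqueness of solutions makes it periodic.
The product `Π_i P_i ^ (a_i / (e_i n_i))` is conserved because its logarithmic derivative is
`Σ_i a_i (H_i - H_i*) = 0`.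
-/

open scoped NNReal

lemma exists_pos_eq_of_le_deriv {f f' : ℝ → ℝ} (hf : ∀ t, HasDerivAt f (f' t) t) {ε : ℝ}
    (hε : 0 < ε) (hf' : ∀ t, ε ≤ f' t) {c : ℝ} (hc : f 0 < c) : ∃ T > 0, f T = c := by
  have hdiff : Differentiable ℝ f := fun t => (hf t).differentiableAt
  set T₁ := (c - f 0) / ε
  have hT₁ : 0 ≤ T₁ := div_nonneg (sub_nonneg.2 hc.le) hε.le
  have hgrowth : ε * (T₁ - 0) ≤ f T₁ - f 0 :=
    mul_sub_le_image_sub_of_le_deriv hdiff (fun t => (hf t).deriv ▸ hf' t) hT₁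
  have hreach : c ≤ f T₁ := by
    rw [sub_zero, mul_div_cancel₀ _ hε.ne'] at hgrowth
    linarith
  obtain ⟨T, hT, hfT⟩ := intermediate_value_Icc hT₁ hdiff.continuous.continuousOn ⟨hc.le, hreach⟩
  exact ⟨T, lt_of_le_of_ne hT.1 (by rintro rfl; exact hc.ne hfT), hfT⟩

lemma exists_eq_mul_cexp_of_hasDerivAt {w w' : ℝ → ℂ} (hw : ∀ t, HasDerivAt w (w' t) t)
    (hw' : Continuous w') (hne : ∀ t, w t ≠ 0) :
    ∃ ψ : ℝ → ℂ, ψ 0 = 0 ∧ (∀ t, HasDerivAt ψ (w' t / w t) t) ∧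
      ∀ t, w t = w 0 * Complex.exp (ψ t) := by
  have hcont : Continuous (fun t => w' t / w t) :=
    hw'.div (continuous_iff_continuousAt.2 fun t => (hw t).continuousAt) hne
  set ψ : ℝ → ℂ := fun t => ∫ s in (0 : ℝ)..t, w' s / w s
  have hψ : ∀ t, HasDerivAt ψ (w' t / w t) t := fun t =>
    (hcont.integral_hasStrictDerivAt 0 t).hasDerivAt
  have hψ₀ : ψ 0 = 0 := intervalIntegral.integral_same
  have hconst : ∀ t, HasDerivAt (fun t => w t * Complex.exp (-ψ t)) 0 t := by
    intro t
    refine ((hw t).mul (hψ t).neg.cexp).congr_deriv ?_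
    have := hne t
    simp only [Pi.neg_apply]
    field_simp
    ring
  refine ⟨ψ, hψ₀, hψ, fun t => ?_⟩
  have := is_const_of_deriv_eq_zero (fun u => (hconst u).differentiableAt)
    (fun u => (hconst u).deriv) t 0
  rw [hψ₀, neg_zero, Complex.exp_zero, mul_one] at this
  rw [← this, mul_assoc, ← Complex.exp_add, neg_add_cancel, Complex.exp_zero, mul_one]

lemma exists_pos_eq_ofReal_mul_of_le_im_div {w w' : ℝ → ℂ} (hw : ∀ t, HasDerivAt w (w' t) t)
    (hw' : Continuous w') (hne : ∀ t, w t ≠ 0) {ε : ℝ} (hε : 0 < ε)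
    (hspeed : ∀ t, ε ≤ (w' t / w t).im) : ∃ T > 0, ∃ r : ℝ, 0 < r ∧ w T = r * w 0 := by
  obtain ⟨ψ, hψ₀, hψ, hwψ⟩ := exists_eq_mul_cexp_of_hasDerivAt hw hw' hne
  obtain ⟨T, hT, hθT⟩ := exists_pos_eq_of_le_deriv (f := fun t => (ψ t).im)
    (fun t => (Complex.imCLM.hasFDerivAt.comp_hasDerivAt t (hψ t))) hε hspeed
    (c := 2 * Real.pi) (by simp [hψ₀, Real.pi_pos])
  refine ⟨T, hT, Real.exp (ψ T).re, Real.exp_pos _, ?_⟩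
  have hθT : (ψ T).im = 2 * Real.pi := hθT
  rw [hwψ T, Complex.exp_eq_exp_re_mul_sin_add_cos, hθT]
  push_cast
  rw [Complex.cos_two_pi, Complex.sin_two_pi]
  ring

theorem periodic_of_hasDerivAt_of_lipschitzOnWith {E : Type*} [NormedAddCommGroup E]
    [NormedSpace ℝ E] {v : E → E} {s : Set E} {K : ℝ≥0} (hv : LipschitzOnWith K v s)
    {z : ℝ → E} (hz : ∀ t, HasDerivAt z (v (z t)) t) (hs : ∀ t, z t ∈ s) {T : ℝ}
    (hT : z T = z 0) : Function.Periodic z T := by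
  have := ODE_solution_unique_univ (v := fun _ => v) (s := fun _ => s) (t₀ := 0)
    (f := fun t => z (t + T)) (g := z) (fun _ => hv)
    (fun t => ⟨(hz (t + T)).comp_add_const t T, hs _⟩) (fun t => ⟨hz t, hs t⟩)
    (by simpa using hT)
  exact congrFun this

namespace LotkaVolterra

noncomputable def expSubOneSub (s : ℝ) : ℝ := Real.exp s - 1 - s

lemma expSubOneSub_nonneg (s : ℝ) : 0 ≤ expSubOneSub s := by
  unfold expSubOneSub; linarith [Real.add_one_le_exp s]

lemma expSubOneSub_pos {s : ℝ} (hs : s ≠ 0) : 0 < expSubOneSub s := by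
  unfold expSubOneSub; linarith [Real.add_one_lt_exp hs]

lemma expSubOneSub_eq_zero_iff {s : ℝ} : expSubOneSub s = 0 ↔ s = 0 :=
  ⟨fun h => by_contra fun hs => (expSubOneSub_pos hs).ne' h,
    fun h => by simp [h, expSubOneSub]⟩

lemma hasDerivAt_expSubOneSub (s : ℝ) : HasDerivAt expSubOneSub (Real.exp s - 1) s :=
  ((Real.hasDerivAt_exp s).sub_const 1).sub (hasDerivAt_id s)

lemma continuous_expSubOneSub : Continuous expSubOneSub := by
  unfold expSubOneSub; fun_prop

lemma abs_le_of_expSubOneSub_le {s C : ℝ} (h : expSubOneSub s ≤ C) : |s| ≤ C + 1 := by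
  unfold expSubOneSub at h
  rcases le_or_gt 0 s with hs | hs
  · nlinarith [abs_of_nonneg hs, Real.quadratic_le_exp_of_nonneg hs, sq_nonneg (s - 1)]
  · rw [abs_of_neg hs]; linarith [Real.exp_pos s]

lemma expSubOneSub_lt_mul {r s : ℝ} (hr : 1 < r) (hs : s ≠ 0) :
    expSubOneSub s < expSubOneSub (r * s) := by
  have hr₀ : 0 < r := by linarith
  -- strict convexity of `exp` between `0` and `r * s`, evaluated at `s = r⁻¹ • (r * s)`
  have hconv := strictConvexOn_exp.2 (Set.mem_univ (r * s)) (Set.mem_univ 0)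
    (mul_ne_zero hr₀.ne' hs) (inv_pos.2 hr₀) (sub_pos.2 (inv_lt_one_of_one_lt₀ hr)) (by ring)
  simp only [smul_eq_mul, ← mul_assoc, inv_mul_cancel₀ hr₀.ne', one_mul, mul_zero, add_zero,
    Real.exp_zero, mul_one] at hconv
  have hscaled : r * expSubOneSub s < expSubOneSub (r * s) := by
    have := mul_lt_mul_of_pos_left hconv hr₀
    rw [mul_add, ← mul_assoc, mul_inv_cancel₀ hr₀.ne', one_mul, mul_sub, mul_one,
      mul_inv_cancel₀ hr₀.ne'] at this
    unfold expSubOneSub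
    linarith
  nlinarith [expSubOneSub_nonneg s]

lemma expSubOneSub_le_mul {r : ℝ} (hr : 1 < r) (s : ℝ) : expSubOneSub s ≤ expSubOneSub (r * s) := by
  rcases eq_or_ne s 0 with rfl | hs
  · simp
  · exact (expSubOneSub_lt_mul hr hs).le

lemma mul_exp_sub_one_pos {s : ℝ} (hs : s ≠ 0) : 0 < s * (Real.exp s - 1) := by
  rcases hs.lt_or_gt with hs | hs
  · exact mul_pos_of_neg_of_neg hs (sub_neg.2 (Real.exp_lt_one_iff.2 hs))
  · exact mul_pos hs (sub_pos.2 (Real.one_lt_exp_iff.2 hs))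

lemma mul_exp_sub_one_nonneg (s : ℝ) : 0 ≤ s * (Real.exp s - 1) := by
  rcases eq_or_ne s 0 with rfl | hs
  · simp
  · exact (mul_exp_sub_one_pos hs).le

noncomputable def energy (α β : ℝ) (z : ℂ) : ℝ :=
  α * expSubOneSub z.re + β * expSubOneSub z.im

/-- The Lotka–Volterra system `H' = H (P* - P)`, `P' = c P (H - H*)` written in the logarithmic
coordinates `z = log (H / H*) + log (P / P*) i`, with `α = c H*` and `β = P*`. -/
noncomputable def field (α β : ℝ) (z : ℂ) : ℂ :=
  ⟨β * (1 - Real.exp z.im), α * (Real.exp z.re - 1)⟩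

variable {α β : ℝ}

lemma energy_eq_zero_iff (hα : 0 < α) (hβ : 0 < β) {z : ℂ} : energy α β z = 0 ↔ z = 0 := by
  refine ⟨fun h => ?_, fun h => by simp [h, energy, expSubOneSub]⟩
  have hre := mul_nonneg hα.le (expSubOneSub_nonneg z.re)
  have him := mul_nonneg hβ.le (expSubOneSub_nonneg z.im)
  unfold energy at h
  apply Complex.ext
  · exact expSubOneSub_eq_zero_iff.1 (by nlinarith)
  · exact expSubOneSub_eq_zero_iff.1 (by nlinarith)

lemma energy_lt_energy_ofReal_mul (hα : 0 < α) (hβ : 0 < β) {r : ℝ} (hr : 1 < r) {z : ℂ}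
    (hz : z ≠ 0) : energy α β z < energy α β (r * z) := by
  simp only [energy, Complex.re_ofReal_mul, Complex.im_ofReal_mul]
  obtain h | h : z.re ≠ 0 ∨ z.im ≠ 0 := by
    by_contra! h
    exact hz (Complex.ext h.1 h.2)
  · exact add_lt_add_of_lt_of_le (mul_lt_mul_of_pos_left (expSubOneSub_lt_mul hr h) hα)
      (mul_le_mul_of_nonneg_left (expSubOneSub_le_mul hr _) hβ.le)
  · exact add_lt_add_of_le_of_lt (mul_le_mul_of_nonneg_left (expSubOneSub_le_mul hr _) hα.le)
      (mul_lt_mul_of_pos_left (expSubOneSub_lt_mul hr h) hβ)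

lemma eq_one_of_energy_ofReal_mul_eq (hα : 0 < α) (hβ : 0 < β) {r : ℝ} (hr : 0 < r) {z : ℂ}
    (hz : z ≠ 0) (h : energy α β (r * z) = energy α β z) : r = 1 := by
  rcases lt_trichotomy r 1 with hr₁ | hr₁ | hr₁
  · have hrz : (r : ℂ) * z ≠ 0 := mul_ne_zero (Complex.ofReal_ne_zero.2 hr.ne') hz
    have := energy_lt_energy_ofReal_mul hα hβ (one_lt_inv₀ hr |>.2 hr₁) hrz
    rw [← mul_assoc, ← Complex.ofReal_mul, inv_mul_cancel₀ hr.ne', Complex.ofReal_one,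
      one_mul] at this
    linarith
  · exact hr₁
  · linarith [energy_lt_energy_ofReal_mul hα hβ hr₁ hz]

lemma continuous_energy : Continuous (energy α β) := by
  unfold energy
  have := continuous_expSubOneSub
  fun_prop

lemma isCompact_energy_eq (hα : 0 < α) (hβ : 0 < β) (k : ℝ) :
    IsCompact {z | energy α β z = k} := by
  refine Metric.isCompact_of_isClosed_isBounded (isClosed_eq continuous_energy continuous_const)
    (isBounded_iff_forall_norm_le.2 ⟨k / α + 1 + (k / β + 1), fun z hz => ?_⟩)
  have hre := mul_nonneg hα.le (expSubOneSub_nonneg z.re)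
  have him := mul_nonneg hβ.le (expSubOneSub_nonneg z.im)
  have hbre : expSubOneSub z.re ≤ k / α := by
    rw [le_div_iff₀' hα]; exact le_of_add_le_of_nonneg_left hz.le him
  have hbim : expSubOneSub z.im ≤ k / β := by
    rw [le_div_iff₀' hβ]; exact le_of_add_le_of_nonneg_right hz.le hre
  exact (Complex.norm_le_abs_re_add_abs_im z).trans
    (add_le_add (abs_le_of_expSubOneSub_le hbre) (abs_le_of_expSubOneSub_le hbim))

lemma contDiff_field : ContDiff ℝ 1 (field α β) := by
  have : field α β = Complex.equivRealProdCLM.symm ∘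
      fun z => (β * (1 - Real.exp (Complex.imCLM z)), α * (Real.exp (Complex.reCLM z) - 1)) :=
    rfl
  rw [this]
  refine Complex.equivRealProdCLM.symm.contDiff.comp ?_
  have := Complex.reCLM.contDiff (𝕜 := ℝ) (n := 1)
  have := Complex.imCLM.contDiff (𝕜 := ℝ) (n := 1)
  fun_prop

-- `(z' / z).im` is the angular velocity of a trajectory through `z`.
lemma im_field_div (z : ℂ) :
    (field α β z / z).im =
      (α * (z.re * (Real.exp z.re - 1)) + β * (z.im * (Real.exp z.im - 1))) / Complex.normSq z := by
  simp only [Complex.div_im, field]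
  ring

lemma im_field_div_pos (hα : 0 < α) (hβ : 0 < β) {z : ℂ} (hz : z ≠ 0) :
    0 < (field α β z / z).im := by
  rw [im_field_div]
  refine div_pos ?_ (Complex.normSq_pos.2 hz)
  obtain h | h : z.re ≠ 0 ∨ z.im ≠ 0 := by
    by_contra! h
    exact hz (Complex.ext h.1 h.2)
  · exact add_pos_of_pos_of_nonneg (mul_pos hα (mul_exp_sub_one_pos h))
      (mul_nonneg hβ.le (mul_exp_sub_one_nonneg _))
  · exact add_pos_of_nonneg_of_pos (mul_nonneg hα.le (mul_exp_sub_one_nonneg _))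
      (mul_pos hβ (mul_exp_sub_one_pos h))

lemma energy_eq_of_hasDerivAt_field {z : ℝ → ℂ} (hz : ∀ t, HasDerivAt z (field α β (z t)) t)
    (t s : ℝ) : energy α β (z t) = energy α β (z s) := by
  have hderiv : ∀ t, HasDerivAt (fun t => energy α β (z t)) 0 t := by
    intro t
    have hre := Complex.reCLM.hasFDerivAt.comp_hasDerivAt t (hz t)
    have him := Complex.imCLM.hasFDerivAt.comp_hasDerivAt t (hz t)
    refine ((((hasDerivAt_expSubOneSub _).comp t hre).const_mul α).add
      (((hasDerivAt_expSubOneSub _).comp t him).const_mul β)).congr_deriv ?_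
    simp only [Function.comp_def, Complex.reCLM_apply, Complex.imCLM_apply, field]
    ring
  exact is_const_of_deriv_eq_zero (fun u => (hderiv u).differentiableAt)
    (fun u => (hderiv u).deriv) t s

lemma exists_pos_le_im_field_div (hα : 0 < α) (hβ : 0 < β) {z₀ : ℂ} (hz₀ : z₀ ≠ 0) :
    ∃ ε > 0, ∀ z, energy α β z = energy α β z₀ → ε ≤ (field α β z / z).im := by
  have hne : ∀ z ∈ {z | energy α β z = energy α β z₀}, z ≠ 0 := by
    rintro z hz rfl
    exact hz₀ ((energy_eq_zero_iff hα hβ).1 (hz.symm.trans ((energy_eq_zero_iff hα hβ).2 rfl)))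
  have hcont : ContinuousOn (fun z => (field α β z / z).im) {z | energy α β z = energy α β z₀} :=
    Complex.continuous_im.comp_continuousOn <|
      contDiff_field.continuous.continuousOn.div continuousOn_id hne
  obtain ⟨z, hz, hmin⟩ := (isCompact_energy_eq hα hβ _).exists_isMinOn ⟨z₀, rfl⟩ hcont
  exact ⟨_, im_field_div_pos hα hβ (hne z hz), fun w hw => hmin hw⟩

lemma exists_lipschitzOnWith_field (hα : 0 < α) (hβ : 0 < β) (k : ℝ) :
    ∃ K, LipschitzOnWith K (field α β) {z | energy α β z = k} := by
  obtain ⟨R, hR⟩ := (isCompact_energy_eq hα hβ k).isBounded.subset_closedBall 0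
  obtain ⟨K, hK⟩ := contDiff_field.contDiffOn.exists_lipschitzOnWith one_ne_zero
    (convex_closedBall 0 R) (isCompact_closedBall 0 R)
  exact ⟨K, hK.mono hR⟩

theorem periodic_or_eq_zero (hα : 0 < α) (hβ : 0 < β) {z : ℝ → ℂ}
    (hz : ∀ t, HasDerivAt z (field α β (z t)) t) :
    (∃ T > 0, Function.Periodic z T) ∨ ∀ t, z t = 0 := by
  have hlevel := energy_eq_of_hasDerivAt_field hz
  by_cases hz₀ : z 0 = 0
  · refine .inr fun t => (energy_eq_zero_iff hα hβ).1 ?_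
    rw [hlevel t 0, hz₀, (energy_eq_zero_iff hα hβ).2 rfl]
  left
  have hne : ∀ t, z t ≠ 0 := fun t h => hz₀ <| (energy_eq_zero_iff hα hβ).1 <| by
    rw [← hlevel t 0, h, (energy_eq_zero_iff hα hβ).2 rfl]
  obtain ⟨ε, hε, hspeed⟩ := exists_pos_le_im_field_div hα hβ hz₀
  obtain ⟨T, hT, r, hr, hzT⟩ := exists_pos_eq_ofReal_mul_of_le_im_div hz
    (contDiff_field.continuous.comp (continuous_iff_continuousAt.2 fun t => (hz t).continuousAt))
    hne hε fun t => hspeed _ (hlevel t 0)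
  have hr₁ : r = 1 := eq_one_of_energy_ofReal_mul_eq hα hβ hr hz₀ (hzT ▸ hlevel T 0)
  obtain ⟨K, hK⟩ := exists_lipschitzOnWith_field hα hβ (energy α β (z 0))
  exact ⟨T, hT, periodic_of_hasDerivAt_of_lipschitzOnWith hK hz (fun t => hlevel t 0)
    (by rw [hzT, hr₁, Complex.ofReal_one, one_mul])⟩

noncomputable def logCoord (A B h p : ℝ) : ℂ := ⟨Real.log (h / A), Real.log (p / B)⟩

section LogCoordinates

variable {c A B : ℝ} {h p : ℝ → ℝ}

lemma hasDerivAt_logCoord (hA : 0 < A) (hB : 0 < B) (hpos : ∀ t, 0 < h t ∧ 0 < p t)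
    (hh : ∀ t, HasDerivAt h (h t * (B - p t)) t)
    (hp : ∀ t, HasDerivAt p (c * p t * (h t - A)) t) (t : ℝ) :
    HasDerivAt (fun t => logCoord A B (h t) (p t))
      (field (c * A) B (logCoord A B (h t) (p t))) t := by
  have hhA : h t / A ≠ 0 := (div_pos (hpos t).1 hA).ne'
  have hpB : p t / B ≠ 0 := (div_pos (hpos t).2 hB).ne'
  have hx := ((hh t).div_const A).log hhA
  have hy := ((hp t).div_const B).log hpB
  refine (Complex.equivRealProdCLM.symm.hasFDerivAt.comp_hasDerivAt t (hx.prodMk hy)).congr_deriv ?_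
  have := (hpos t).1.ne'
  have := (hpos t).2.ne'
  apply Complex.ext <;>
    simp only [ContinuousLinearEquiv.coe_coe, Complex.equivRealProdCLM_symm_apply_re,
      Complex.equivRealProdCLM_symm_apply_im, field, logCoord,
      Real.exp_log (div_pos (hpos t).1 hA), Real.exp_log (div_pos (hpos t).2 hB)] <;>
    field_simp

lemma eq_mul_exp_logCoord_re (hA : 0 < A) {x : ℝ} (hx : 0 < x) (y : ℝ) :
    x = A * Real.exp (logCoord A B x y).re := by
  rw [logCoord, Real.exp_log (div_pos hx hA), mul_div_cancel₀ _ hA.ne']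

lemma eq_mul_exp_logCoord_im (hB : 0 < B) (x : ℝ) {y : ℝ} (hy : 0 < y) :
    y = B * Real.exp (logCoord A B x y).im := by
  rw [logCoord, Real.exp_log (div_pos hy hB), mul_div_cancel₀ _ hB.ne']

lemma eq_energy_logCoord_add (hA : 0 < A) (hB : 0 < B) {x y : ℝ} (hx : 0 < x) (hy : 0 < y) :
    c * (x - A * Real.log x) + (y - B * Real.log y) =
      energy (c * A) B (logCoord A B x y) + (c * A * (1 - Real.log A) + B * (1 - Real.log B)) := by
  simp only [energy, logCoord, expSubOneSub]
  rw [Real.exp_log (div_pos hx hA), Real.exp_log (div_pos hy hB), Real.log_div hx.ne' hA.ne',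
    Real.log_div hy.ne' hB.ne']
  field_simp
  ring

theorem conserved_and_periodic_or_equilibrium (hc : 0 < c) (hA : 0 < A) (hB : 0 < B)
    (hpos : ∀ t, 0 < h t ∧ 0 < p t) (hh : ∀ t, HasDerivAt h (h t * (B - p t)) t)
    (hp : ∀ t, HasDerivAt p (c * p t * (h t - A)) t) :
    (∀ t s : ℝ, c * (h t - A * Real.log (h t)) + (p t - B * Real.log (p t))
      = c * (h s - A * Real.log (h s)) + (p s - B * Real.log (p s))) ∧
    ((∃ T > (0:ℝ), ∀ t, h (t + T) = h t ∧ p (t + T) = p t) ∨ (∀ t, h t = A ∧ p t = B)) := by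
  set z := fun t => logCoord A B (h t) (p t)
  have hz : ∀ t, HasDerivAt z (field (c * A) B (z t)) t := hasDerivAt_logCoord hA hB hpos hh hp
  have hh_eq t : h t = A * Real.exp (z t).re := eq_mul_exp_logCoord_re hA (hpos t).1 _
  have hp_eq t : p t = B * Real.exp (z t).im := eq_mul_exp_logCoord_im hB _ (hpos t).2
  refine ⟨fun t s => ?_, ?_⟩
  · rw [eq_energy_logCoord_add hA hB (hpos t).1 (hpos t).2,
      eq_energy_logCoord_add hA hB (hpos s).1 (hpos s).2, energy_eq_of_hasDerivAt_field hz t s]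
  rcases periodic_or_eq_zero (mul_pos hc hA) hB hz with ⟨T, hT, hper⟩ | hzero
  · exact .inl ⟨T, hT, fun t => by rw [hh_eq, hh_eq t, hp_eq, hp_eq t, hper t]; simp⟩
  · exact .inr fun t => by rw [hh_eq, hp_eq, hzero t]; simp

end LogCoordinates

end LotkaVolterra

lemma prod_rpow_eq_of_sum_mul_eq {ι : Type*} (s : Finset ι) {a c Hs : ι → ℝ} {H P : ℝ → ι → ℝ}
    (hc : ∀ i ∈ s, c i ≠ 0) (hpos : ∀ t, ∀ i ∈ s, 0 < P t i)
    (hP : ∀ t, ∀ i ∈ s, HasDerivAt (fun u => P u i) (c i * P t i * (H t i - Hs i)) t)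
    (hsum : ∀ t, ∑ i ∈ s, a i * H t i = ∑ i ∈ s, a i * Hs i) (t u : ℝ) :
    ∏ i ∈ s, P t i ^ (a i / c i) = ∏ i ∈ s, P u i ^ (a i / c i) := by
  have hexp : ∀ t, ∏ i ∈ s, P t i ^ (a i / c i) =
      Real.exp (∑ i ∈ s, a i / c i * Real.log (P t i)) := fun t => by
    rw [Real.exp_sum]
    refine Finset.prod_congr rfl fun i hi => ?_
    rw [Real.rpow_def_of_pos (hpos t i hi), mul_comm]
  have hderiv : ∀ t, HasDerivAt (fun t => ∑ i ∈ s, a i / c i * Real.log (P t i)) 0 t := by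
    intro t
    refine (HasDerivAt.fun_sum fun i hi => ((hP t i hi).log (hpos t i hi).ne').const_mul
      (a i / c i)).congr_deriv ?_
    calc ∑ i ∈ s, a i / c i * (c i * P t i * (H t i - Hs i) / P t i)
        = ∑ i ∈ s, a i * H t i - ∑ i ∈ s, a i * Hs i := by
          rw [← Finset.sum_sub_distrib]
          refine Finset.sum_congr rfl fun i hi => ?_
          have := hc i hi
          have := (hpos t i hi).ne'
          field_simp
      _ = 0 := sub_eq_zero.2 (hsum t)
  rw [hexp, hexp, is_const_of_deriv_eq_zero (fun v => (hderiv v).differentiableAt)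
    (fun v => (hderiv v).deriv) t u]

open Filter Finset

theorem statement19_general
    (n : ℕ) (a e ν Hs Ps : ℕ → ℝ)
    (he : ∀ i < n, 0 < e i) (hν : ∀ i < n, 0 < ν i)
    (hHs : ∀ i < n, 0 < Hs i) (hPs : ∀ i < n, 0 < Ps i)
    (H P : ℝ → ℕ → ℝ)
    (hpos : ∀ t : ℝ, ∀ i < n, 0 < H t i ∧ 0 < P t i)
    (hH : ∀ t : ℝ, ∀ i < n, HasDerivAt (fun s => H s i) (H t i * (Ps i - P t i)) t)
    (hP : ∀ t : ℝ, ∀ i < n, HasDerivAt (fun s => P s i)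
      (e i * ν i * P t i * (H t i - Hs i)) t)
    (hsum : ∀ t : ℝ, ∑ i ∈ Finset.range n, a i * H t i = ∑ i ∈ Finset.range n, a i * Hs i) :
    (∀ t s : ℝ,
      (∏ i ∈ Finset.range n, P t i ^ (a i / (e i * ν i)))
        = ∏ i ∈ Finset.range n, P s i ^ (a i / (e i * ν i))) ∧
    (∀ i < n, ∀ t s : ℝ,
      e i * ν i * (H t i - Hs i * Real.log (H t i)) + (P t i - Ps i * Real.log (P t i))
        = e i * ν i * (H s i - Hs i * Real.log (H s i)) + (P s i - Ps i * Real.log (P s i))) ∧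
    (∀ i < n,
      (∃ T > (0:ℝ), ∀ t : ℝ, H (t + T) i = H t i ∧ P (t + T) i = P t i) ∨
      (∀ t : ℝ, H t i = Hs i ∧ P t i = Ps i)) := by
  have hc : ∀ i < n, 0 < e i * ν i := fun i hi => mul_pos (he i hi) (hν i hi)
  have hpair i (hi : i < n) :=
    LotkaVolterra.conserved_and_periodic_or_equilibrium (hc i hi) (hHs i hi) (hPs i hi)
      (fun t => hpos t i hi) (fun t => hH t i hi) (fun t => hP t i hi)
  refine ⟨prod_rpow_eq_of_sum_mul_eq (range n) (c := fun i => e i * ν i) ?_ ?_ ?_ hsum,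
    fun i hi => (hpair i hi).1, fun i hi => (hpair i hi).2⟩
  · exact fun i hi => (hc i (mem_range.1 hi)).ne'
  · exact fun t i hi => (hpos t i (mem_range.1 hi)).2
  · exact fun t i hi => hP t i (mem_range.1 hi)

/-- an entire positive solution of the decoupled planar predator–prey systems
`H_i' = H_i(P_i* − P_i)`, `P_i' = e_i n_i P_i(H_i − H_i*)` satisfying
`Σ_i a_i H_i(t) = Σ_i a_i H_i*` conserves `Π_i P_i^{a_i/(e_i n_i)}`; each pair `(H_i, P_i)`
conserves `e_i n_i(H_i − H_i* log H_i) + (P_i − P_i* log P_i)` and is either periodic or the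
constant equilibrium `(H_i*, P_i*)`. -/
theorem statement19
    (n : ℕ) (a e ν Hs Ps : ℕ → ℝ)
    (ha : ∀ i < n, 0 < a i) (he : ∀ i < n, 0 < e i) (hν : ∀ i < n, 0 < ν i)
    (hHs : ∀ i < n, 0 < Hs i) (hPs : ∀ i < n, 0 < Ps i)
    (H P : ℝ → ℕ → ℝ)
    (hpos : ∀ t : ℝ, ∀ i < n, 0 < H t i ∧ 0 < P t i)
    (hH : ∀ t : ℝ, ∀ i < n, HasDerivAt (fun s => H s i) (H t i * (Ps i - P t i)) t)
    (hP : ∀ t : ℝ, ∀ i < n, HasDerivAt (fun s => P s i)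
      (e i * ν i * P t i * (H t i - Hs i)) t)
    (hsum : ∀ t : ℝ, ∑ i ∈ Finset.range n, a i * H t i = ∑ i ∈ Finset.range n, a i * Hs i) :
    (∀ t s : ℝ,
      (∏ i ∈ Finset.range n, P t i ^ (a i / (e i * ν i)))
        = ∏ i ∈ Finset.range n, P s i ^ (a i / (e i * ν i))) ∧
    (∀ i < n, ∀ t s : ℝ,
      e i * ν i * (H t i - Hs i * Real.log (H t i)) + (P t i - Ps i * Real.log (P t i))
        = e i * ν i * (H s i - Hs i * Real.log (H s i)) + (P s i - Ps i * Real.log (P s i))) ∧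
    (∀ i < n,
      (∃ T > (0:ℝ), ∀ t : ℝ, H (t + T) i = H t i ∧ P (t + T) i = P t i) ∨
      (∀ t : ℝ, H t i = Hs i ∧ P t i = Ps i)) :=
  statement19_general n a e ν Hs Ps he hν hHs hPs H P hpos hH hP hsum
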